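/- arXiv:2503.17159 — 6 statements merged into one kernel-verified Lean document; each statement's English description precedes it below -/
import Mathlib

section
/- The three-element chain bi-Heyting algebra c₃ = {0, 1/2, 1} is simple: its only congruences are the diagonal (identity) congruence and the trivial (all-pairs) congruence. -/
/-- Heyting implication on the three-element chain `Fin 3` (`0 < 1 < 2`,
with `2` as top): `a → b = ⊤` if `a ≤ b`, and `b` otherwise. -/
def chainImp (a b : Fin 3) : Fin 3 := if a ≤ b then 2 else b

/-- Exclusion on the three-element chain: `a ∖ b = 0` if `a ≤ b`, `a` otherwise. -/
def chainExcl (a b : Fin 3) : Fin 3 := if a ≤ b then 0 else a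

theorem chain3_simple (r : Fin 3 → Fin 3 → Prop)
    (hequiv : Equivalence r)
    (hmeet : ∀ a b c d, r a b → r c d → r (a ⊓ c) (b ⊓ d))
    (hjoin : ∀ a b c d, r a b → r c d → r (a ⊔ c) (b ⊔ d))
    (himp : ∀ a b c d, r a b → r c d → r (chainImp a c) (chainImp b d))
    (hexcl : ∀ a b c d, r a b → r c d → r (chainExcl a c) (chainExcl b d)) :
    (∀ a b, r a b ↔ a = b) ∨ (∀ a b, r a b) := by
  by_cases h : ∀ a b, r a b → a = b
  · left
    exact fun a b => ⟨h a b, fun e => e ▸ hequiv.refl a⟩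
  · right
    push_neg at h
    obtain ⟨a, b, hab, hne⟩ := h
    -- from r 0 1 we get everything
    have step01 : r 0 1 → r 0 2 := by
      intro h01
      have := himp 0 1 0 0 h01 (hequiv.refl 0)
      have h20 : r 2 0 := by simpa [chainImp] using this
      exact hequiv.symm h20
    have step12 : r 1 2 → r 0 2 := by
      intro h12
      have := hexcl 1 2 1 1 h12 (hequiv.refl 1)
      simpa [chainExcl] using this
    have step02 : r 0 2 → r 0 1 := by
      intro h02
      have := hmeet 0 2 1 1 h02 (hequiv.refl 1)
      simpa using this
    have key : r 0 1 ∧ r 1 2 ∧ r 0 2 := by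
      have hba := hequiv.symm hab
      fin_cases a <;> fin_cases b <;> simp_all
      all_goals exact hequiv.trans (hequiv.symm ‹r 0 1›) ‹r 0 2›
    obtain ⟨k01, k12, k02⟩ := key
    have k10 := hequiv.symm k01
    have k21 := hequiv.symm k12
    have k20 := hequiv.symm k02
    intro x y
    fin_cases x <;> fin_cases y <;> first | exact hequiv.refl _ | assumption
end

section
/- If two pointed Kripke models (M, w) and (M', w') are n-bisimilar, then for every bi-intuitionistic formula φ of bi-depth at most n, M, w ⊩ φ if and only if M', w' ⊩ φ. -/
/-- Formulas of the bi-intuitionistic language. -/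
inductive Form : Type
  | var : ℕ → Form
  | top : Form
  | bot : Form
  | and : Form → Form → Form
  | or : Form → Form → Form
  | imp : Form → Form → Form
  | excl : Form → Form → Form

/-- A Kripke model: a preordered set with a persistent valuation. -/
structure KModel where
  W : Type
  le : W → W → Prop
  refl : ∀ w, le w w
  trans : ∀ u v w, le u v → le v w → le u w
  I : ℕ → W → Prop
  persist : ∀ p w v, le w v → I p w → I p v

/-- The forcing relation. -/
def forces (M : KModel) : M.W → Form → Prop
  | w, .var p => M.I p w
  | _, .top => True
  | _, .bot => False
  | w, .and φ ψ => forces M w φ ∧ forces M w ψ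
  | w, .or φ ψ => forces M w φ ∨ forces M w ψ
  | w, .imp φ ψ => ∀ v, M.le w v → forces M v φ → forces M v ψ
  | w, .excl φ ψ => ∃ v, M.le v w ∧ forces M v φ ∧ ¬ forces M v ψ

/-- Bi-depth of a formula. -/
def depth : Form → ℕ
  | .var _ => 1
  | .top => 1
  | .bot => 1
  | .and φ ψ => max (depth φ) (depth ψ)
  | .or φ ψ => max (depth φ) (depth ψ)
  | .imp φ ψ => max (depth φ) (depth ψ) + 1
  | .excl φ ψ => max (depth φ) (depth ψ) + 1

/-- `n`-bisimilarity of pointed models. -/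
def nbisim (M M' : KModel) : ℕ → M.W → M'.W → Prop
  | 0, w, w' => ∀ p, M.I p w ↔ M'.I p w'
  | m + 1, w, w' =>
      (∀ p, M.I p w ↔ M'.I p w') ∧
      (∀ v, M.le v w → ∃ v', M'.le v' w' ∧ nbisim M M' m v v') ∧
      (∀ v, M.le w v → ∃ v', M'.le w' v' ∧ nbisim M M' m v v') ∧
      (∀ v', M'.le v' w' → ∃ v, M.le v w ∧ nbisim M M' m v v') ∧
      (∀ v', M'.le w' v' → ∃ v, M.le w v ∧ nbisim M M' m v v')

theorem nbisim_imp_depth_equiv (n : ℕ) (M M' : KModel) (w : M.W) (w' : M'.W)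
    (h : nbisim M M' n w w') :
    ∀ φ : Form, depth φ ≤ n → (forces M w φ ↔ forces M' w' φ) := by
  intro φ
  induction φ generalizing n w w' with
  | var p =>
    intro hd
    match n, h with
    | m+1, h => exact h.1 p
  | top => intro _; simp [forces]
  | bot => intro _; simp [forces]
  | and φ ψ ihφ ihψ =>
    intro hd
    simp only [depth, max_le_iff] at hd
    simp only [forces]
    exact and_congr (ihφ n w w' h hd.1) (ihψ n w w' h hd.2)
  | or φ ψ ihφ ihψ =>
    intro hd
    simp only [depth, max_le_iff] at hd
    simp only [forces]
    exact or_congr (ihφ n w w' h hd.1) (ihψ n w w' h hd.2)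
  | imp φ ψ ihφ ihψ =>
    intro hd
    simp only [depth] at hd
    match n, h, hd with
    | m+1, h, hd =>
      have hm : max (depth φ) (depth ψ) ≤ m := Nat.lt_succ_iff.mp hd
      simp only [forces]
      constructor
      · intro hf v' hle hφ
        obtain ⟨v, hlev, hb⟩ := h.2.2.2.2 v' hle
        exact (ihψ m v v' hb (le_trans (le_max_right _ _) hm)).mp
          (hf v hlev ((ihφ m v v' hb (le_trans (le_max_left _ _) hm)).mpr hφ))
      · intro hf v hle hφ
        obtain ⟨v', hlev, hb⟩ := h.2.2.1 v hle
        exact (ihψ m v v' hb (le_trans (le_max_right _ _) hm)).mpr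
          (hf v' hlev ((ihφ m v v' hb (le_trans (le_max_left _ _) hm)).mp hφ))
  | excl φ ψ ihφ ihψ =>
    intro hd
    simp only [depth] at hd
    match n, h, hd with
    | m+1, h, hd =>
      have hm : max (depth φ) (depth ψ) ≤ m := Nat.lt_succ_iff.mp hd
      simp only [forces]
      constructor
      · rintro ⟨v, hle, hφ, hψ⟩
        obtain ⟨v', hlev, hb⟩ := h.2.1 v hle
        exact ⟨v', hlev, (ihφ m v v' hb (le_trans (le_max_left _ _) hm)).mp hφ,
          fun hc => hψ ((ihψ m v v' hb (le_trans (le_max_right _ _) hm)).mpr hc)⟩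
      · rintro ⟨v', hle, hφ, hψ⟩
        obtain ⟨v, hlev, hb⟩ := h.2.2.2.1 v' hle
        exact ⟨v, hlev, (ihφ m v v' hb (le_trans (le_max_left _ _) hm)).mpr hφ,
          fun hc => hψ ((ihψ m v v' hb (le_trans (le_max_right _ _) hm)).mp hc)⟩
end

section
/- The strong bi-intuitionistic logic sBIL is implicative; in particular, condition (IL3) holds for the exclusion connective: from the hypotheses p₁ → q₁, q₁ → p₁, p₂ → q₂, q₂ → p₂ one can derive (p₁ ∖ q₁) → (p₂ ∖ q₂) in sBIL. -/
/-- Negation `¬φ := φ → ⊥`. -/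
def Form.neg (φ : Form) : Form := φ.imp .bot

/-- Co-negation `∼φ := ⊤ ∖ φ`. -/
def Form.wneg (φ : Form) : Form := Form.excl .top φ

/-- The axioms A1–A14 of the generalized Hilbert calculi for bi-intuitionistic logic. -/
inductive Ax : Form → Prop
  | a1 (φ ψ : Form) : Ax (φ.imp (ψ.imp φ))
  | a2 (φ ψ χ : Form) : Ax ((φ.imp (ψ.imp χ)).imp ((φ.imp ψ).imp (φ.imp χ)))
  | a3 (φ ψ : Form) : Ax (φ.imp (φ.or ψ))
  | a4 (φ ψ : Form) : Ax (ψ.imp (φ.or ψ))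
  | a5 (φ ψ χ : Form) : Ax ((φ.imp χ).imp ((ψ.imp χ).imp ((φ.or ψ).imp χ)))
  | a6 (φ ψ : Form) : Ax ((φ.and ψ).imp φ)
  | a7 (φ ψ : Form) : Ax ((φ.and ψ).imp ψ)
  | a8 (φ ψ χ : Form) : Ax ((χ.imp φ).imp ((χ.imp ψ).imp (χ.imp (φ.and ψ))))
  | a9 (φ : Form) : Ax (Form.bot.imp φ)
  | a10 (φ : Form) : Ax (φ.imp Form.top)
  | a11 (φ ψ : Form) : Ax (φ.imp (ψ.or (φ.excl ψ)))
  | a12 (φ ψ : Form) : Ax ((φ.excl ψ).imp (φ.imp ψ).wneg)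
  | a13 (φ ψ χ : Form) : Ax (((φ.excl ψ).excl χ).imp (φ.excl (ψ.or χ)))
  | a14 (φ ψ : Form) : Ax ((φ.excl ψ).neg.imp (φ.imp ψ))

/-- The strong bi-intuitionistic logic `sBIL`. -/
inductive sprv : Set Form → Form → Prop
  | ax {Γ φ} : Ax φ → sprv Γ φ
  | el {Γ φ} : φ ∈ Γ → sprv Γ φ
  | mp {Γ φ ψ} : sprv Γ (φ.imp ψ) → sprv Γ φ → sprv Γ ψ
  | sdn {Γ φ} : sprv Γ φ → sprv Γ φ.wneg.neg

/-- The weak bi-intuitionistic logic `wBIL`. -/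
inductive wprv : Set Form → Form → Prop
  | ax {Γ φ} : Ax φ → wprv Γ φ
  | el {Γ φ} : φ ∈ Γ → wprv Γ φ
  | mp {Γ φ ψ} : wprv Γ (φ.imp ψ) → wprv Γ φ → wprv Γ ψ
  | wdn {Γ : Set Form} {φ} : wprv ∅ φ → wprv Γ φ.wneg.neg

/-- MP-only fragment (no sdn), for which the deduction theorem holds. -/
inductive prv : Set Form → Form → Prop
  | ax {Γ φ} : Ax φ → prv Γ φ
  | el {Γ φ} : φ ∈ Γ → prv Γ φ
  | mp {Γ φ ψ} : prv Γ (φ.imp ψ) → prv Γ φ → prv Γ ψ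

theorem prv.toS {Γ φ} (h : prv Γ φ) : sprv Γ φ := by
  induction h with
  | ax a => exact .ax a
  | el hm => exact .el hm
  | mp _ _ ih1 ih2 => exact .mp ih1 ih2

theorem prv.impId {Γ} (φ : Form) : prv Γ (φ.imp φ) :=
  .mp (.mp (.ax (.a2 φ (φ.imp φ) φ)) (.ax (.a1 _ _))) (.ax (.a1 _ _))

/-- Deduction theorem for the MP-only fragment. -/
theorem prv.dt {Γ ψ φ} (h : prv (insert ψ Γ) φ) : prv Γ (ψ.imp φ) := by
  induction h with
  | ax a => exact .mp (.ax (.a1 _ _)) (.ax a)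
  | el hm =>
    rcases Set.mem_insert_iff.mp hm with rfl | hm
    · exact prv.impId _
    · exact .mp (.ax (.a1 _ _)) (.el hm)
  | mp _ _ ih1 ih2 => exact .mp (.mp (.ax (.a2 _ _ _)) ih1) ih2

theorem prv.syllThm {Γ} (φ ψ χ : Form) :
    prv Γ ((φ.imp ψ).imp ((ψ.imp χ).imp (φ.imp χ))) := by
  apply prv.dt; apply prv.dt; apply prv.dt
  exact .mp (.el (show ψ.imp χ ∈ _ by simp))
    (.mp (.el (show φ.imp ψ ∈ _ by simp)) (.el (show φ ∈ _ by simp)))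

/-- Syllogism at the `sprv` level. -/
theorem sprv.syll {Γ} {φ ψ χ : Form} (h1 : sprv Γ (φ.imp ψ))
    (h2 : sprv Γ (ψ.imp χ)) : sprv Γ (φ.imp χ) :=
  .mp (.mp (prv.toS (prv.syllThm φ ψ χ)) h1) h2

/-- Co-residuation rule, the only place where `sdn` is used. -/
theorem sprv.coRes {Γ} {φ ψ χ : Form} (h : sprv Γ (φ.imp (ψ.or χ))) :
    sprv Γ ((φ.excl ψ).imp χ) := by
  have h1 : sprv Γ ((φ.imp (ψ.or χ)).wneg.neg) := .sdn h
  have h2 : sprv Γ ((φ.excl (ψ.or χ)).imp Form.bot) :=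
    sprv.syll (.ax (.a12 φ (ψ.or χ))) h1
  have h3 : sprv Γ (((φ.excl ψ).excl χ).imp Form.bot) :=
    sprv.syll (.ax (.a13 φ ψ χ)) h2
  exact .mp (.ax (.a14 (φ.excl ψ) χ)) h3

/-- Left monotonicity of exclusion. -/
theorem sprv.monoL {Γ} {α β γ : Form} (h : sprv Γ (α.imp β)) :
    sprv Γ ((α.excl γ).imp (β.excl γ)) :=
  sprv.coRes (sprv.syll h (.ax (.a11 β γ)))

theorem prv.orMonoL {Γ} (φ ψ δ : Form) :
    prv Γ ((φ.imp ψ).imp ((φ.or δ).imp (ψ.or δ))) := by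
  apply prv.dt
  refine .mp (.mp (.ax (.a5 φ δ (ψ.or δ))) ?_) (.ax (.a4 ψ δ))
  exact .mp (.mp (prv.syllThm φ ψ (ψ.or δ)) (.el (show φ.imp ψ ∈ _ by simp))) (.ax (.a3 ψ δ))

/-- Right antitonicity of exclusion. -/
theorem sprv.antiR {Γ} {φ ψ χ : Form} (h : sprv Γ (φ.imp ψ)) :
    sprv Γ ((χ.excl ψ).imp (χ.excl φ)) := by
  apply sprv.coRes
  have h1 : sprv Γ ((φ.or (χ.excl φ)).imp (ψ.or (χ.excl φ))) :=
    .mp (prv.toS (prv.orMonoL φ ψ (χ.excl φ))) h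
  exact sprv.syll (.ax (.a11 χ φ)) h1


theorem sBIL_IL3_excl :
    sprv {(Form.var 0).imp (Form.var 1), (Form.var 1).imp (Form.var 0),
          (Form.var 2).imp (Form.var 3), (Form.var 3).imp (Form.var 2)}
      (((Form.var 0).excl (Form.var 2)).imp ((Form.var 1).excl (Form.var 3))) := by
  have hp : sprv {(Form.var 0).imp (Form.var 1), (Form.var 1).imp (Form.var 0),
      (Form.var 2).imp (Form.var 3), (Form.var 3).imp (Form.var 2)}
      ((Form.var 0).imp (Form.var 1)) := .el (by simp)
  have hq : sprv {(Form.var 0).imp (Form.var 1), (Form.var 1).imp (Form.var 0),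
      (Form.var 2).imp (Form.var 3), (Form.var 3).imp (Form.var 2)}
      ((Form.var 3).imp (Form.var 2)) := .el (by simp)
  exact sprv.syll (sprv.monoL hp) (sprv.antiR hq)
end

section
/- In sBIL, dual residuation holds with arbitrary context: Γ ⊢ₛ (φ ∖ ψ) → χ if and only if Γ ⊢ₛ φ → (ψ ∨ χ). -/
lemma sprv_imp_trans {Γ} {a b c : Form} (h₁ : sprv Γ (a.imp b))
    (h₂ : sprv Γ (b.imp c)) : sprv Γ (a.imp c) := by
  have hab : sprv Γ (a.imp (b.imp c)) :=
    sprv.mp (sprv.ax (Ax.a1 _ _)) h₂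
  exact sprv.mp (sprv.mp (sprv.ax (Ax.a2 a b c)) hab) h₁

theorem sBIL_dual_residuation (Γ : Set Form) (φ ψ χ : Form) :
    sprv Γ ((φ.excl ψ).imp χ) ↔ sprv Γ (φ.imp (ψ.or χ)) := by
  constructor
  · intro h
    have h1 : sprv Γ (φ.imp (ψ.or (φ.excl ψ))) := sprv.ax (Ax.a11 φ ψ)
    have h2 : sprv Γ ((φ.excl ψ).imp (ψ.or χ)) :=
      sprv_imp_trans h (sprv.ax (Ax.a4 ψ χ))
    have h3 : sprv Γ ((ψ.or (φ.excl ψ)).imp (ψ.or χ)) :=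
      sprv.mp (sprv.mp (sprv.ax (Ax.a5 ψ (φ.excl ψ) (ψ.or χ)))
        (sprv.ax (Ax.a3 ψ χ))) h2
    exact sprv_imp_trans h1 h3
  · intro h
    have hdn : sprv Γ ((φ.imp (ψ.or χ)).wneg.neg) := sprv.sdn h
    have h13 : sprv Γ (((φ.excl ψ).excl χ).imp (φ.excl (ψ.or χ))) :=
      sprv.ax (Ax.a13 φ ψ χ)
    have h12 : sprv Γ ((φ.excl (ψ.or χ)).imp (φ.imp (ψ.or χ)).wneg) :=
      sprv.ax (Ax.a12 φ (ψ.or χ))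
    have hneg : sprv Γ (((φ.excl ψ).excl χ).neg) :=
      sprv_imp_trans (sprv_imp_trans h13 h12) hdn
    exact sprv.mp (sprv.ax (Ax.a14 (φ.excl ψ) χ)) hneg
end

section
/- The weak bi-intuitionistic logic wBIL satisfies the deduction-detachment theorem: Γ, φ ⊢_w ψ if and only if Γ ⊢_w φ → ψ. -/
lemma wprv_id (Γ : Set Form) (φ : Form) : wprv Γ (φ.imp φ) :=
  wprv.mp (wprv.mp (wprv.ax (Ax.a2 φ (φ.imp φ) φ)) (wprv.ax (Ax.a1 φ (φ.imp φ))))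
    (wprv.ax (Ax.a1 φ φ))

lemma wprv_mono {Γ Δ : Set Form} {φ : Form} (h : wprv Γ φ) (hs : Γ ⊆ Δ) :
    wprv Δ φ := by
  induction h generalizing Δ with
  | ax ha => exact wprv.ax ha
  | el hm => exact wprv.el (hs hm)
  | mp _ _ ih1 ih2 => exact wprv.mp (ih1 hs) (ih2 hs)
  | wdn h _ => exact wprv.wdn h

lemma wprv_ded {Δ : Set Form} {ψ : Form} (h : wprv Δ ψ) :
    ∀ Γ φ, Δ = insert φ Γ → wprv Γ (φ.imp ψ) := by
  induction h with
  | ax ha => intro Γ φ _; exact wprv.mp (wprv.ax (Ax.a1 _ _)) (wprv.ax ha)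
  | el hm =>
    intro Γ φ hΔ; subst hΔ
    rcases hm with rfl | hm
    · exact wprv_id _ _
    · exact wprv.mp (wprv.ax (Ax.a1 _ _)) (wprv.el hm)
  | mp _ _ ih1 ih2 =>
    intro Γ φ hΔ
    exact wprv.mp (wprv.mp (wprv.ax (Ax.a2 _ _ _)) (ih1 Γ φ hΔ)) (ih2 Γ φ hΔ)
  | wdn h _ => intro Γ φ _; exact wprv.mp (wprv.ax (Ax.a1 _ _)) (wprv.wdn h)

theorem wBIL_deduction_detachment (Γ : Set Form) (φ ψ : Form) :
    wprv (insert φ Γ) ψ ↔ wprv Γ (φ.imp ψ) := by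
  constructor
  · intro h; exact wprv_ded h Γ φ rfl
  · intro h
    exact wprv.mp (wprv_mono h (Set.subset_insert _ _)) (wprv.el (Set.mem_insert _ _))
end

section
/- sBIL satisfies a modified deduction theorem: Γ, φ ⊢ₛ ψ if and only if there exists n ∈ ℕ such that Γ ⊢ₛ (¬∼)ⁿφ → ψ. -/
/-- `(¬∼)ⁿφ`. -/
def DN : ℕ → Form → Form
  | 0, φ => φ
  | n + 1, φ => (DN n φ).wneg.neg


/-- The pure modus-ponens fragment (no double-negation rule). -/
inductive iprv : Set Form → Form → Prop
  | ax {Γ φ} : Ax φ → iprv Γ φ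
  | el {Γ φ} : φ ∈ Γ → iprv Γ φ
  | mp {Γ φ ψ} : iprv Γ (φ.imp ψ) → iprv Γ φ → iprv Γ ψ

lemma i2s {Γ : Set Form} {φ : Form} (h : iprv Γ φ) : sprv Γ φ := by
  induction h with
  | ax hx => exact .ax hx
  | el hm => exact .el hm
  | mp _ _ ih1 ih2 => exact .mp ih1 ih2

lemma iprv_id (Γ : Set Form) (φ : Form) : iprv Γ (φ.imp φ) :=
  .mp (.mp (.ax (.a2 φ (φ.imp φ) φ)) (.ax (.a1 φ (φ.imp φ)))) (.ax (.a1 φ φ))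

lemma iprv_dt {Γ : Set Form} {φ ψ : Form} (h : iprv (insert φ Γ) ψ) :
    iprv Γ (φ.imp ψ) := by
  induction h with
  | ax hx => exact .mp (.ax (.a1 _ _)) (.ax hx)
  | @el χ hm =>
    rcases Set.mem_insert_iff.mp hm with rfl | h
    · exact iprv_id _ _
    · exact .mp (.ax (.a1 _ _)) (.el h)
  | mp _ _ ih1 ih2 => exact .mp (.mp (.ax (.a2 _ _ _)) ih1) ih2

lemma iprv_top (Γ : Set Form) : iprv Γ Form.top :=
  .mp (.ax (.a10 (Form.bot.imp Form.bot))) (.ax (.a9 Form.bot))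

/-- Transitivity of implication, as a theorem. -/
lemma iprv_T1 (Γ : Set Form) (a b c : Form) :
    iprv Γ ((a.imp b).imp ((b.imp c).imp (a.imp c))) := by
  apply iprv_dt; apply iprv_dt; apply iprv_dt
  exact .mp (.el (show b.imp c ∈ _ by simp))
    (.mp (.el (show a.imp b ∈ _ by simp)) (.el (show a ∈ _ by simp)))

/-- `(a → b) → (⊤ → (b ∨ ∼a))`. -/
lemma iprv_T3 (Γ : Set Form) (a b : Form) :
    iprv Γ ((a.imp b).imp (Form.top.imp (b.or a.wneg))) := by
  apply iprv_dt; apply iprv_dt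
  have htop : iprv (insert Form.top (insert (a.imp b) Γ)) Form.top :=
    .el (show Form.top ∈ _ by simp)
  have hcase : iprv (insert Form.top (insert (a.imp b) Γ)) (a.or a.wneg) :=
    .mp (.ax (.a11 Form.top a)) htop
  have h1 : iprv (insert Form.top (insert (a.imp b) Γ)) (a.imp (b.or a.wneg)) := by
    apply iprv_dt
    exact .mp (.ax (.a3 b a.wneg))
      (.mp (.el (show a.imp b ∈ _ by simp)) (.el (show a ∈ _ by simp)))
  have h2 : iprv (insert Form.top (insert (a.imp b) Γ)) (a.wneg.imp (b.or a.wneg)) :=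
    .ax (.a4 b a.wneg)
  exact .mp (.mp (.mp (.ax (.a5 a a.wneg (b.or a.wneg))) h1) h2) hcase

/-- `¬∼θ → θ`. -/
lemma iprv_T4 (Γ : Set Form) (θ : Form) : iprv Γ (θ.wneg.neg.imp θ) := by
  apply iprv_dt
  exact .mp (.mp (.ax (.a14 Form.top θ)) (.el (show θ.wneg.neg ∈ _ by simp)))
    (iprv_top _)

lemma sprv_weaken {Γ Δ : Set Form} {φ : Form} (h : sprv Γ φ) (hs : Γ ⊆ Δ) :
    sprv Δ φ := by
  induction h with
  | ax hx => exact .ax hx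
  | el hm => exact .el (hs hm)
  | mp _ _ ih1 ih2 => exact .mp ih1 ih2
  | sdn _ ih => exact .sdn ih

lemma strans {Γ : Set Form} {a b c : Form} (h1 : sprv Γ (a.imp b))
    (h2 : sprv Γ (b.imp c)) : sprv Γ (a.imp c) :=
  .mp (.mp (i2s (iprv_T1 Γ a b c)) h1) h2

/-- Derived residuation rule (uses `sdn`). -/
lemma sres {Γ : Set Form} {φ ψ χ : Form} (h : sprv Γ (φ.imp (ψ.or χ))) :
    sprv Γ ((φ.excl ψ).imp χ) := by
  have d1 : sprv Γ (φ.imp (ψ.or χ)).wneg.neg := .sdn h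
  have d3 : sprv Γ (φ.excl (ψ.or χ)).neg := strans (.ax (.a12 φ (ψ.or χ))) d1
  have d5 : sprv Γ ((φ.excl ψ).excl χ).neg := strans (.ax (.a13 φ ψ χ)) d3
  exact .mp (.ax (.a14 (φ.excl ψ) χ)) d5

/-- Monotonicity of `¬∼` (uses `sdn`). -/
lemma smono {Γ : Set Form} {a b : Form} (h : sprv Γ (a.imp b)) :
    sprv Γ (a.wneg.neg.imp b.wneg.neg) := by
  have s1 : sprv Γ (Form.top.imp (b.or a.wneg)) := .mp (i2s (iprv_T3 Γ a b)) h
  have s2 : sprv Γ (b.wneg.imp a.wneg) := sres s1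
  exact .mp (i2s (iprv_T1 Γ b.wneg a.wneg Form.bot)) s2

lemma sDN_le {Γ : Set Form} {φ : Form} {m n : ℕ} (h : m ≤ n) :
    sprv Γ ((DN n φ).imp (DN m φ)) := by
  induction h with
  | refl => exact i2s (iprv_id Γ (DN m φ))
  | @step n _ ih => exact strans (i2s (iprv_T4 Γ (DN n φ))) ih

lemma main_aux {Δ : Set Form} {ψ : Form} (h : sprv Δ ψ) :
    ∀ Γ φ, Δ = insert φ Γ → ∃ n, sprv Γ ((DN n φ).imp ψ) := by
  induction h with
  | ax hx => exact fun Γ φ _ => ⟨0, .mp (.ax (.a1 _ _)) (.ax hx)⟩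
  | @el χ hm =>
    intro Γ φ hΔ
    subst hΔ
    rcases Set.mem_insert_iff.mp hm with rfl | h
    · exact ⟨0, i2s (iprv_id Γ χ)⟩
    · exact ⟨0, .mp (.ax (.a1 _ _)) (.el h)⟩
  | @mp χ ψ' _ _ ih1 ih2 =>
    intro Γ φ hΔ
    obtain ⟨n1, d1⟩ := ih1 Γ φ hΔ
    obtain ⟨n2, d2⟩ := ih2 Γ φ hΔ
    refine ⟨max n1 n2, ?_⟩
    have e1 : sprv Γ ((DN (max n1 n2) φ).imp (χ.imp ψ')) :=
      strans (sDN_le (Nat.le_max_left n1 n2)) d1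
    have e2 : sprv Γ ((DN (max n1 n2) φ).imp χ) :=
      strans (sDN_le (Nat.le_max_right n1 n2)) d2
    exact .mp (.mp (.ax (.a2 (DN (max n1 n2) φ) χ ψ')) e1) e2
  | @sdn χ _ ih =>
    intro Γ φ hΔ
    obtain ⟨n, d⟩ := ih Γ φ hΔ
    exact ⟨n + 1, smono d⟩

theorem sBIL_modified_deduction (Γ : Set Form) (φ ψ : Form) :
    sprv (insert φ Γ) ψ ↔ ∃ n : ℕ, sprv Γ ((DN n φ).imp ψ) := by
  constructor
  · exact fun h => main_aux h Γ φ rfl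
  · rintro ⟨n, h⟩
    have h' : sprv (insert φ Γ) ((DN n φ).imp ψ) :=
      sprv_weaken h (Set.subset_insert φ Γ)
    have hDN : sprv (insert φ Γ) (DN n φ) := by
      clear h h'
      induction n with
      | zero => exact .el (Set.mem_insert φ Γ)
      | succ n ih => exact .sdn ih
    exact .mp h' hDN
end
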